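/- arXiv:2102.08915 — 3 statements merged into one kernel-verified Lean document; each statement's English description precedes it below -/
import Mathlib

section
/- If each f_{ij}: ℝ≥0 → ℝ≥0 is nondecreasing and convex with f_{ij}(0) = 0, and all weights a^i_{jk} are nonnegative, then for each item i the set function f_i(S) = Σ_{j∈S} f_{ij}(Σ_{k∈S} a^i_{jk}) is a nondecreasing, nonnegative, supermodular set function on subsets of {1,...,n}. -/
lemma convDiffAux {f : ℝ → ℝ} (hf : ConvexOn ℝ (Set.Ici 0) f)
    {x y c : ℝ} (hx : 0 ≤ x) (hc : 0 ≤ c) (hxy : x ≤ y) :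
    f (x + c) - f x ≤ f (y + c) - f y := by
  rcases hc.eq_or_lt with rfl | hc
  · simp
  rcases hxy.eq_or_lt with rfl | hxy
  · exact le_refl _
  have hy : (0:ℝ) ≤ y := hx.trans hxy.le
  have hxc : (0:ℝ) ≤ x + c := by linarith
  have hyc : (0:ℝ) ≤ y + c := by linarith
  have h1 : (f (x + c) - f x) / (x + c - x) ≤ (f (y + c) - f x) / (y + c - x) :=
    hf.secant_mono (Set.mem_Ici.2 hx) (Set.mem_Ici.2 hxc) (Set.mem_Ici.2 hyc)
      (by linarith) (by linarith) (by linarith)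
  have h2 : (f x - f (y + c)) / (x - (y + c)) ≤ (f y - f (y + c)) / (y - (y + c)) :=
    hf.secant_mono (Set.mem_Ici.2 hyc) (Set.mem_Ici.2 hx) (Set.mem_Ici.2 hy)
      (by linarith) (by linarith) hxy.le
  have h2' : (f (y + c) - f x) / (y + c - x) ≤ (f (y + c) - f y) / c := by
    have e1 : (f x - f (y + c)) / (x - (y + c)) = (f (y + c) - f x) / (y + c - x) := by
      rw [← neg_div_neg_eq]; ring_nf
    have e2 : (f y - f (y + c)) / (y - (y + c)) = (f (y + c) - f y) / c := by
      rw [← neg_div_neg_eq]; ring_nf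
    rw [e1, e2] at h2; exact h2
  have h3 : (f (x + c) - f x) / c ≤ (f (y + c) - f y) / c := by
    have : x + c - x = c := by ring
    rw [this] at h1
    exact h1.trans h2'
  have := (div_le_div_iff_of_pos_right hc).mp h3
  linarith

/-- With nondecreasing convex externality functions `g j : ℝ≥0 → ℝ≥0`, `g j 0 = 0`,
and nonnegative weights, the set function `F(S) = ∑_{j∈S} g_j(∑_{k∈S} a_{jk})`
is nondecreasing, nonnegative and supermodular. -/
theorem stmt_1 (n : ℕ) (a : Fin n → Fin n → ℝ) (ha : ∀ j k, 0 ≤ a j k)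
    (g : Fin n → ℝ → ℝ)
    (hg0 : ∀ j, g j 0 = 0)
    (hgnonneg : ∀ j y, 0 ≤ y → 0 ≤ g j y)
    (hgmono : ∀ j, MonotoneOn (g j) (Set.Ici 0))
    (hgconv : ∀ j, ConvexOn ℝ (Set.Ici 0) (g j))
    (F : Finset (Fin n) → ℝ)
    (hF : ∀ S, F S = ∑ j ∈ S, g j (∑ k ∈ S, a j k)) :
    (∀ S T : Finset (Fin n), S ⊆ T → F S ≤ F T) ∧
    (∀ S : Finset (Fin n), 0 ≤ F S) ∧
    (∀ (S T : Finset (Fin n)) (ℓ : Fin n), S ⊆ T → ℓ ∉ T →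
      F (insert ℓ S) - F S ≤ F (insert ℓ T) - F T) := by
  have hsum : ∀ (j : Fin n) (S : Finset (Fin n)), (0:ℝ) ≤ ∑ k ∈ S, a j k :=
    fun j S => Finset.sum_nonneg fun k _ => ha j k
  have hsumle : ∀ (j : Fin n) (S T : Finset (Fin n)), S ⊆ T →
      (∑ k ∈ S, a j k) ≤ ∑ k ∈ T, a j k := fun j S T hST =>
    Finset.sum_le_sum_of_subset_of_nonneg hST fun k _ _ => ha j k
  refine ⟨?_, ?_, ?_⟩
  · intro S T hST
    rw [hF, hF]
    calc ∑ j ∈ S, g j (∑ k ∈ S, a j k)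
        ≤ ∑ j ∈ S, g j (∑ k ∈ T, a j k) := by
          refine Finset.sum_le_sum fun j _ => ?_
          exact hgmono j (Set.mem_Ici.2 (hsum j S)) (Set.mem_Ici.2 (hsum j T))
            (hsumle j S T hST)
      _ ≤ ∑ j ∈ T, g j (∑ k ∈ T, a j k) :=
          Finset.sum_le_sum_of_subset_of_nonneg hST
            (fun j _ _ => hgnonneg j _ (hsum j T))
  · intro S
    rw [hF]
    exact Finset.sum_nonneg fun j _ => hgnonneg j _ (hsum j S)
  · intro S T ℓ hST hℓT
    have hℓS : ℓ ∉ S := fun h => hℓT (hST h)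
    have key : ∀ (U : Finset (Fin n)), ℓ ∉ U →
        F (insert ℓ U) - F U
          = g ℓ (a ℓ ℓ + ∑ k ∈ U, a ℓ k)
            + ∑ j ∈ U, (g j (a j ℓ + ∑ k ∈ U, a j k) - g j (∑ k ∈ U, a j k)) := by
      intro U hℓU
      rw [hF, hF, Finset.sum_insert hℓU]
      have hin : ∀ j : Fin n, (∑ k ∈ insert ℓ U, a j k) = a j ℓ + ∑ k ∈ U, a j k :=
        fun j => Finset.sum_insert hℓU
      simp only [hin]
      rw [Finset.sum_sub_distrib]
      ring
    rw [key S hℓS, key T hℓT]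
    have h1 : g ℓ (a ℓ ℓ + ∑ k ∈ S, a ℓ k) ≤ g ℓ (a ℓ ℓ + ∑ k ∈ T, a ℓ k) :=
      hgmono ℓ (Set.mem_Ici.2 (by have := hsum ℓ S; have := ha ℓ ℓ; linarith))
        (Set.mem_Ici.2 (by have := hsum ℓ T; have := ha ℓ ℓ; linarith))
        (by have := hsumle ℓ S T hST; linarith)
    have h2 : (∑ j ∈ S, (g j (a j ℓ + ∑ k ∈ S, a j k) - g j (∑ k ∈ S, a j k)))
        ≤ ∑ j ∈ T, (g j (a j ℓ + ∑ k ∈ T, a j k) - g j (∑ k ∈ T, a j k)) := by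
      calc (∑ j ∈ S, (g j (a j ℓ + ∑ k ∈ S, a j k) - g j (∑ k ∈ S, a j k)))
          ≤ ∑ j ∈ S, (g j (a j ℓ + ∑ k ∈ T, a j k) - g j (∑ k ∈ T, a j k)) := by
            refine Finset.sum_le_sum fun j _ => ?_
            have := convDiffAux (hgconv j) (hsum j S) (ha j ℓ) (hsumle j S T hST)
            simpa [add_comm] using this
        _ ≤ ∑ j ∈ T, (g j (a j ℓ + ∑ k ∈ T, a j k) - g j (∑ k ∈ T, a j k)) := by
            refine Finset.sum_le_sum_of_subset_of_nonneg hST fun j _ _ => ?_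
            have hmono : g j (∑ k ∈ T, a j k) ≤ g j (a j ℓ + ∑ k ∈ T, a j k) :=
              hgmono j (Set.mem_Ici.2 (hsum j T))
                (Set.mem_Ici.2 (by have := hsum j T; have := ha j ℓ; linarith))
                (by have := ha j ℓ; linarith)
            linarith
    linarith
end

section
/- In the fair contention resolution scheme with independent participation probabilities p_1,...,p_n (not all zero), conditioned on agent k requesting the item, agent k receives the item with probability exactly (1 − Π_{i=1}^n (1 − p_i)) / (Σ_{i=1}^n p_i), and this quantity is at least 1 − 1/e when Σ_i p_i ≤ 1. -/
open Finset

-- weight of a set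
def qf {n : ℕ} (p : Fin n → ℝ) (S : Finset (Fin n)) : ℝ :=
  (∏ i ∈ S, p i) * ∏ i ∈ Sᶜ, (1 - p i)

lemma aux_sum_all {n : ℕ} (p : Fin n → ℝ) (s : Finset (Fin n)) :
    ∑ S ∈ s.powerset, (∏ i ∈ S, p i) * ∏ i ∈ s \ S, (1 - p i) = 1 := by
  rw [← Finset.prod_add]
  simp

lemma aux_sum_P {n : ℕ} (p : Fin n → ℝ) (k : Fin n) :
    ∑ S ∈ Finset.univ.powerset.filter (fun S => k ∈ S), qf p S = p k := by
  rw [Finset.sum_nbij' (i := fun S => S.erase k) (j := fun B => insert k B)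
    (t := (Finset.univ.erase k).powerset)
    (g := fun B => p k * ((∏ i ∈ B, p i) * ∏ i ∈ (Finset.univ.erase k) \ B, (1 - p i)))]
  · rw [← Finset.mul_sum, aux_sum_all, mul_one]
  · intro S hS
    simp only [mem_filter, mem_powerset] at hS
    simp only [mem_powerset]
    intro i hi
    simp only [mem_erase] at hi ⊢
    exact ⟨hi.1, mem_univ i⟩
  · intro B hB
    simp only [mem_powerset] at hB
    simp only [mem_filter, mem_powerset]
    exact ⟨fun i _ => mem_univ i, mem_insert_self k B⟩
  · intro S hS
    simp only [mem_filter] at hS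
    exact Finset.insert_erase hS.2
  · intro B hB
    simp only [mem_powerset] at hB
    exact Finset.erase_insert (fun hkB => (mem_erase.mp (hB hkB)).1 rfl)
  · intro S hS
    simp only [mem_filter, mem_powerset] at hS
    have hkS := hS.2
    rw [qf, ← Finset.mul_prod_erase S p hkS, mul_assoc]
    congr 2
    apply Finset.prod_congr _ (fun _ _ => rfl)
    ext i
    simp only [mem_compl, mem_sdiff, mem_erase]
    constructor
    · intro hi
      exact ⟨⟨fun h => hi (h ▸ hkS), mem_univ i⟩, fun h => hi h.2⟩
    · rintro ⟨⟨hik, -⟩, h⟩ hiS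
      exact h ⟨hik, hiS⟩

lemma aux_bij {n : ℕ} (k j : Fin n) (hjk : j ≠ k)
    (f : Finset (Fin n) → ℝ) :
    ∑ S ∈ (Finset.univ.powerset.filter (fun S => k ∈ S)).filter (fun S => j ∈ S), f S
  = ∑ B ∈ (Finset.univ.powerset.filter (fun S => k ∈ S)).filter (fun S => j ∉ S),
      f (insert j B) := by
  apply Finset.sum_nbij' (i := fun S => S.erase j) (j := fun B => insert j B)
  · intro S hS
    simp only [mem_filter, mem_powerset] at hS ⊢
    exact ⟨⟨fun i _ => mem_univ i, mem_erase.mpr ⟨Ne.symm hjk, hS.1.2⟩⟩, notMem_erase j S⟩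
  · intro B hB
    simp only [mem_filter, mem_powerset] at hB ⊢
    exact ⟨⟨fun i _ => mem_univ i, mem_insert_of_mem hB.1.2⟩, mem_insert_self j B⟩
  · intro S hS
    simp only [mem_filter] at hS
    exact Finset.insert_erase hS.2
  · intro B hB
    simp only [mem_filter] at hB
    exact Finset.erase_insert hB.2
  · intro S hS
    simp only [mem_filter] at hS
    rw [Finset.insert_erase hS.2]

lemma aux_qsum {n : ℕ} (p : Fin n → ℝ) (j : Fin n) (B : Finset (Fin n)) (hj : j ∉ B) :
    qf p (insert j B) + qf p B
    = (∏ i ∈ B, p i) * ∏ i ∈ (insert j B)ᶜ, (1 - p i) := by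
  have hjB : j ∈ Bᶜ := mem_compl.mpr hj
  rw [qf, qf, Finset.prod_insert hj, Finset.compl_insert,
    ← Finset.mul_prod_erase Bᶜ _ hjB]
  ring

lemma key {n : ℕ} (p : Fin n → ℝ) (k : Fin n) (hT : (0:ℝ) < ∑ i, p i) :
    (∑ S ∈ Finset.univ.powerset.filter (fun S => k ∈ S),
        qf p S *
          (if S.card ≤ 1 then 1 else
            (1 / ∑ ℓ, p ℓ) * ((∑ j ∈ S.erase k, p j) / ((S.card : ℝ) - 1)
              + (∑ j ∈ Sᶜ, p j) / (S.card : ℝ)))) * (∑ ℓ, p ℓ)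
    = p k * (1 - ∏ i, (1 - p i)) := by
  classical
  set P := Finset.univ.powerset.filter (fun S : Finset (Fin n) => k ∈ S) with hP
  have hmemP : ∀ S, S ∈ P ↔ k ∈ S := by
    intro S; simp [hP]
  have hkP : ({k} : Finset (Fin n)) ∈ P := (hmemP _).mpr (mem_singleton_self k)
  -- step 1 : pointwise rewrite
  rw [Finset.sum_mul]
  have step1 : ∀ S ∈ P,
      qf p S *
        (if S.card ≤ 1 then 1 else
          (1 / ∑ ℓ, p ℓ) * ((∑ j ∈ S.erase k, p j) / ((S.card : ℝ) - 1)
            + (∑ j ∈ Sᶜ, p j) / (S.card : ℝ))) * (∑ ℓ, p ℓ)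
      = (∑ j ∈ Finset.univ.erase k,
          qf p S * (if j ∈ S then p j / ((S.card : ℝ) - 1) else p j / (S.card : ℝ)))
        + (if S = {k} then qf p S * p k else 0) := by
    intro S hS
    have hkS : k ∈ S := (hmemP S).mp hS
    by_cases hc : S.card ≤ 1
    · have hS1 : S = {k} := by
        have h1 : 1 ≤ S.card := Finset.card_pos.mpr ⟨k, hkS⟩
        have : S.card = 1 := le_antisymm hc h1
        obtain ⟨a, ha⟩ := Finset.card_eq_one.mp this
        rw [ha] at hkS ⊢
        rw [Finset.mem_singleton.mp hkS]
      subst hS1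
      rw [if_pos hc, if_pos rfl]
      have hsum' : ∀ j ∈ Finset.univ.erase k,
          qf p {k} * (if j ∈ ({k} : Finset (Fin n)) then p j / ((({k} : Finset (Fin n)).card : ℝ) - 1)
            else p j / (({k} : Finset (Fin n)).card : ℝ)) = qf p {k} * p j := by
        intro j hj
        rw [if_neg (by simpa using (Finset.mem_erase.mp hj).1), Finset.card_singleton]
        norm_num
      rw [Finset.sum_congr rfl hsum', ← Finset.mul_sum]
      have : p k + ∑ j ∈ Finset.univ.erase k, p j = ∑ j, p j :=
        Finset.add_sum_erase _ _ (mem_univ k)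
      linear_combination (- qf p {k}) * this
    · rw [if_neg hc]
      push_neg at hc
      have hX : ∑ j ∈ Finset.univ.erase k,
          qf p S * (if j ∈ S then p j / ((S.card : ℝ) - 1) else p j / (S.card : ℝ))
          = qf p S * ((∑ j ∈ S.erase k, p j) / ((S.card : ℝ) - 1)
              + (∑ j ∈ Sᶜ, p j) / (S.card : ℝ)) := by
        rw [← Finset.mul_sum]
        congr 1
        have h1 : (Finset.univ.erase k).filter (fun j => j ∈ S) = S.erase k := by
          ext i; simp [Finset.mem_filter, Finset.mem_erase]
        have h2 : (Finset.univ.erase k).filter (fun j => ¬ j ∈ S) = Sᶜ := by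
          ext i
          simp only [Finset.mem_filter, Finset.mem_erase, Finset.mem_compl, mem_univ,
            and_true, true_and]
          constructor
          · rintro ⟨-, h⟩; exact h
          · intro h; exact ⟨fun he => h (he ▸ hkS), h⟩
        rw [← Finset.sum_filter_add_sum_filter_not (Finset.univ.erase k) (fun j => j ∈ S), h1, h2]
        congr 1
        · rw [Finset.sum_div]
          exact Finset.sum_congr rfl fun i hi => by
            rw [if_pos (Finset.mem_erase.mp hi).2]
        · rw [Finset.sum_div]
          exact Finset.sum_congr rfl fun i hi => by
            rw [if_neg (Finset.mem_compl.mp hi)]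
      rw [hX, if_neg (by rintro rfl; simp at hc)]
      field_simp
      ring
  rw [Finset.sum_congr rfl step1, Finset.sum_add_distrib]
  -- the singleton term
  have hsing : ∑ S ∈ P, (if S = {k} then qf p S * p k else 0) = qf p {k} * p k := by
    rw [Finset.sum_ite_eq' P ({k} : Finset (Fin n)) (fun S => qf p S * p k), if_pos hkP]
  rw [hsing, Finset.sum_comm]
  -- inner sum for fixed j
  have hinner : ∀ j ∈ Finset.univ.erase k,
      ∑ S ∈ P, qf p S * (if j ∈ S then p j / ((S.card : ℝ) - 1) else p j / (S.card : ℝ))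
      = ∑ A ∈ P.filter (fun A => j ∈ A), qf p A / ((A.card : ℝ) - 1) := by
    intro j hj
    have hjk : j ≠ k := (Finset.mem_erase.mp hj).1
    rw [← Finset.sum_filter_add_sum_filter_not P (fun S => j ∈ S)]
    have e1 : ∑ S ∈ P.filter (fun S => j ∈ S),
        qf p S * (if j ∈ S then p j / ((S.card : ℝ) - 1) else p j / (S.card : ℝ))
        = ∑ B ∈ P.filter (fun S => ¬ j ∈ S), qf p (insert j B) * (p j / (B.card : ℝ)) := by
      rw [hP, aux_bij k j hjk]
      apply Finset.sum_congr rfl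
      intro B hB
      have hjB : j ∉ B := by
        have := (Finset.mem_filter.mp hB).2; simpa using this
      rw [if_pos (Finset.mem_insert_self j B), Finset.card_insert_of_notMem hjB]
      push_cast
      ring_nf
    have e2 : ∑ S ∈ P.filter (fun S => ¬ j ∈ S),
        qf p S * (if j ∈ S then p j / ((S.card : ℝ) - 1) else p j / (S.card : ℝ))
        = ∑ B ∈ P.filter (fun S => ¬ j ∈ S), qf p B * (p j / (B.card : ℝ)) := by
      apply Finset.sum_congr rfl
      intro B hB
      have hjB : ¬ j ∈ B := (Finset.mem_filter.mp hB).2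
      rw [if_neg hjB]
    rw [e1, e2, ← Finset.sum_add_distrib]
    have e3 : ∀ B ∈ P.filter (fun S => ¬ j ∈ S),
        qf p (insert j B) * (p j / (B.card : ℝ)) + qf p B * (p j / (B.card : ℝ))
        = (∏ i ∈ (insert j B).erase j, p i) * (∏ i ∈ (insert j B)ᶜ, (1 - p i))
            * (p j / (((insert j B).card : ℝ) - 1)) := by
      intro B hB
      have hjB : j ∉ B := (Finset.mem_filter.mp hB).2
      rw [← add_mul, aux_qsum p j B hjB,
        Finset.erase_insert hjB, Finset.card_insert_of_notMem hjB]
      push_cast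
      ring_nf
    have e5 : ∀ A ∈ P.filter (fun A => j ∈ A),
        (∏ i ∈ A.erase j, p i) * (∏ i ∈ Aᶜ, (1 - p i)) * (p j / ((A.card : ℝ) - 1))
        = qf p A / ((A.card : ℝ) - 1) := by
      intro A hA
      have hjA : j ∈ A := (Finset.mem_filter.mp hA).2
      rw [qf, ← Finset.mul_prod_erase A p hjA]
      ring
    rw [Finset.sum_congr rfl e3]
    exact (aux_bij k j hjk (fun A => (∏ i ∈ A.erase j, p i) * (∏ i ∈ Aᶜ, (1 - p i))
      * (p j / ((A.card : ℝ) - 1)))).symm.trans (Finset.sum_congr rfl e5)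
  rw [Finset.sum_congr rfl hinner]
  -- swap the double sum
  have hswap : ∑ j ∈ Finset.univ.erase k, ∑ A ∈ P.filter (fun A => j ∈ A),
        qf p A / ((A.card : ℝ) - 1)
      = ∑ A ∈ P, ∑ j ∈ A.erase k, qf p A / ((A.card : ℝ) - 1) := by
    apply Finset.sum_comm'
    intro j A
    simp only [Finset.mem_filter, Finset.mem_erase, hP, Finset.mem_powerset, mem_univ,
      true_and]
    tauto
  rw [hswap]
  have hfin : ∀ A ∈ P, ∑ j ∈ A.erase k, qf p A / ((A.card : ℝ) - 1)
      = qf p A - (if A = {k} then qf p A else 0) := by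
    intro A hA
    have hkA : k ∈ A := (hmemP A).mp hA
    rw [Finset.sum_const, Finset.card_erase_of_mem hkA, nsmul_eq_mul]
    by_cases hA1 : A = {k}
    · subst hA1
      simp
    · rw [if_neg hA1, sub_zero]
      have h1 : 1 ≤ A.card := Finset.card_pos.mpr ⟨k, hkA⟩
      have h2 : 2 ≤ A.card := by
        rcases Nat.lt_or_ge A.card 2 with h | h
        · exfalso
          have : A.card = 1 := by omega
          obtain ⟨a, ha⟩ := Finset.card_eq_one.mp this
          apply hA1
          rw [ha] at hkA ⊢
          rw [Finset.mem_singleton.mp hkA]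
        · exact h
      have hcast : ((A.card - 1 : ℕ) : ℝ) = (A.card : ℝ) - 1 := by
        push_cast [Nat.cast_sub h1]
        ring
      have hne : (A.card : ℝ) - 1 ≠ 0 := by
        have : (2:ℝ) ≤ (A.card : ℝ) := by exact_mod_cast h2
        intro h; linarith
      rw [hcast, mul_comm, div_mul_cancel₀ _ hne]
  rw [Finset.sum_congr rfl hfin, Finset.sum_sub_distrib, aux_sum_P,
    Finset.sum_ite_eq' P ({k} : Finset (Fin n)) (fun S => qf p S), if_pos hkP]
  have hq : qf p {k} = p k * ∏ i ∈ Finset.univ.erase k, (1 - p i) := by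
    rw [qf, Finset.prod_singleton, Finset.compl_singleton]
  have hprod : ∏ i, (1 - p i) = (1 - p k) * ∏ i ∈ Finset.univ.erase k, (1 - p i) :=
    (Finset.mul_prod_erase Finset.univ (fun i => 1 - p i) (mem_univ k)).symm
  rw [hq, hprod]
  ring

/-- Fair contention resolution: conditioned on agent `k` requesting the item
(requests are independent Bernoulli with probabilities `p_i`), agent `k` receives
it with probability exactly `(1 − ∏(1 − p_i)) / ∑ p_i`; moreover this quantity is
at least `1 − 1/e` when `∑ p_i ≤ 1`. -/
theorem stmt_9 (n : ℕ) (p : Fin n → ℝ) (hp : ∀ i, p i ∈ Set.Icc (0:ℝ) 1)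
    (hsum : 0 < ∑ i, p i) (k : Fin n) (hk : 0 < p k)
    (alloc : Fin n → Finset (Fin n) → ℝ)
    (halloc : ∀ (i : Fin n) (S : Finset (Fin n)), i ∈ S → alloc i S =
      if S.card ≤ 1 then 1 else
        (1 / ∑ ℓ, p ℓ) * ((∑ j ∈ S.erase i, p j) / ((S.card : ℝ) - 1)
          + (∑ j ∈ Sᶜ, p j) / (S.card : ℝ))) :
    ((∑ S ∈ Finset.univ.powerset.filter (fun S => k ∈ S),
        (∏ i ∈ S, p i) * (∏ i ∈ Sᶜ, (1 - p i)) * alloc k S) / p k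
      = (1 - ∏ i, (1 - p i)) / ∑ i, p i) ∧
    ((∑ i, p i) ≤ 1 →
      (1 - ∏ i, (1 - p i)) / ∑ i, p i ≥ 1 - 1 / Real.exp 1) := by
  constructor
  · have hT : 0 < ∑ i, p i := hsum
    have hrw : ∑ S ∈ Finset.univ.powerset.filter (fun S => k ∈ S),
        (∏ i ∈ S, p i) * (∏ i ∈ Sᶜ, (1 - p i)) * alloc k S
      = ∑ S ∈ Finset.univ.powerset.filter (fun S => k ∈ S),
          qf p S * (if S.card ≤ 1 then 1 else
            (1 / ∑ ℓ, p ℓ) * ((∑ j ∈ S.erase k, p j) / ((S.card : ℝ) - 1)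
              + (∑ j ∈ Sᶜ, p j) / (S.card : ℝ))) := by
      apply Finset.sum_congr rfl
      intro S hS
      have hkS : k ∈ S := by
        have := (Finset.mem_filter.mp hS).2
        simpa using this
      rw [halloc k S hkS]
      rfl
    have hkey := key p k hT
    rw [hrw]
    have hsumval : ∑ S ∈ Finset.univ.powerset.filter (fun S => k ∈ S),
        qf p S * (if S.card ≤ 1 then 1 else
          (1 / ∑ ℓ, p ℓ) * ((∑ j ∈ S.erase k, p j) / ((S.card : ℝ) - 1)
            + (∑ j ∈ Sᶜ, p j) / (S.card : ℝ)))
        = p k * (1 - ∏ i, (1 - p i)) / (∑ i, p i) := by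
      rw [eq_div_iff hT.ne']
      exact hkey
    rw [hsumval, mul_div_assoc, mul_div_cancel_left₀ _ (ne_of_gt hk)]
  · intro hle
    have hT : 0 < ∑ i, p i := hsum
    have h1 : ∏ i, (1 - p i) ≤ Real.exp (-∑ i, p i) := by
      calc ∏ i, (1 - p i) ≤ ∏ i, Real.exp (-p i) := by
            apply Finset.prod_le_prod
            · intro i _; linarith [(hp i).2]
            · intro i _; linarith [Real.add_one_le_exp (-p i)]
        _ = Real.exp (∑ i, -p i) := (Real.exp_sum _ _).symm
        _ = Real.exp (-∑ i, p i) := by rw [Finset.sum_neg_distrib]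
    have hc := convexOn_exp.2 (Set.mem_univ (0:ℝ)) (Set.mem_univ (-1))
      (by linarith : (0:ℝ) ≤ 1 - ∑ i, p i) hT.le (by ring)
    simp only [smul_eq_mul, Real.exp_zero] at hc
    rw [show (1 - ∑ i, p i) * 0 + (∑ i, p i) * (-1) = -∑ i, p i by ring] at hc
    have he : Real.exp (-1) = 1 / Real.exp 1 := by
      rw [Real.exp_neg]; ring
    rw [ge_iff_le, le_div_iff₀ hT, ← he]
    nlinarith [h1, hc]
end

section
/- For any p_1,...,p_n ∈ [0,1] with 0 < Σ_{i=1}^n p_i ≤ 1, we have (1 − Π_{i=1}^n (1 − p_i)) / (Σ_{i=1}^n p_i) ≥ 1 − 1/e. -/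
/-- For `p_1,…,p_n ∈ [0,1]` with `0 < ∑ p_i ≤ 1`,
`(1 − ∏(1 − p_i)) / ∑ p_i ≥ 1 − 1/e`. -/
theorem stmt_10 (n : ℕ) (p : Fin n → ℝ) (hp : ∀ i, p i ∈ Set.Icc (0:ℝ) 1)
    (h0 : 0 < ∑ i, p i) (h1 : ∑ i, p i ≤ 1) :
    (1 - ∏ i, (1 - p i)) / ∑ i, p i ≥ 1 - 1 / Real.exp 1 := by
  set s := ∑ i, p i with hs
  have hprod : ∏ i, (1 - p i) ≤ Real.exp (-s) := by
    have : ∏ i, (1 - p i) ≤ ∏ i, Real.exp (-p i) := by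
      apply Finset.prod_le_prod
      · intro i _; linarith [(hp i).2]
      · intro i _
        have := Real.add_one_le_exp (-p i)
        linarith
    calc ∏ i, (1 - p i) ≤ ∏ i, Real.exp (-p i) := this
      _ = Real.exp (∑ i, -p i) := (Real.exp_sum _ _).symm
      _ = Real.exp (-s) := by rw [← Finset.sum_neg_distrib]
  -- convexity: exp(-s) ≤ (1-s) * exp 0 + s * exp (-1)
  have hconv : Real.exp (-s) ≤ (1 - s) * Real.exp 0 + s * Real.exp (-1) := by
    have := convexOn_exp.2 (Set.mem_univ (0:ℝ)) (Set.mem_univ (-1:ℝ))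
      (by linarith : (0:ℝ) ≤ 1 - s) (le_of_lt h0) (by ring)
    simpa [smul_eq_mul, mul_comm] using this
  have key : 1 - Real.exp (-s) ≥ s * (1 - 1 / Real.exp 1) := by
    have h' : Real.exp (-1) = 1 / Real.exp 1 := by
      rw [Real.exp_neg]; ring
    rw [Real.exp_zero, h'] at hconv
    nlinarith
  rw [ge_iff_le, le_div_iff₀ h0]
  nlinarith
end
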